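/- Pointwise inequality in the proof of the truncation lemma: for f ∈ D(a) and Pf = (1 ∧ |f|) sign(f), one has almost everywhere ⟨Q ∇(Pf), ∇(Pf)⟩ := Σ_{j=1}^m ⟨Q ∇(Pf)_j, ∇(Pf)_j⟩ = ((1 + sign(1 − |f|))²/4 − (1 ∧ |f|)²/|f|²) χ_{{f ≠ 0}} |∇|f||²_Q + ((1 ∧ |f|)²/|f|²) χ_{{f ≠ 0}} Σ_{j=1}^m ⟨Q ∇f_j, ∇f_j⟩ ≤ Σ_{j=1}^m ⟨Q ∇f_j, ∇f_j⟩, where |z|²_Q = ⟨Qz, z⟩. -/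

import Mathlib

open MeasureTheory Filter Topology ENNReal

noncomputable section

attribute [local instance] Classical.propDecidable

/-- Euclidean space `ℝ^d`. -/
abbrev Rd (d : ℕ) := EuclideanSpace ℝ (Fin d)

/-- Euclidean space `ℝ^m`. -/
abbrev Em (m : ℕ) := EuclideanSpace ℝ (Fin m)

/-- A test function: smooth with compact support. -/
def IsTest {d : ℕ} (φ : Rd d → ℝ) : Prop := ContDiff ℝ (⊤ : ℕ∞) φ ∧ HasCompactSupport φ

/-- `Gi` is the weak `i`-th partial derivative of `g` (integration by parts
against smooth compactly supported functions). -/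
def HasWeakPartial {d : ℕ} {F : Type} [NormedAddCommGroup F] [NormedSpace ℝ F]
    (g : Rd d → F) (Gi : Rd d → F) (i : Fin d) : Prop :=
  ∀ φ : Rd d → ℝ, IsTest φ →
    ∫ x, (fderiv ℝ φ x (EuclideanSpace.single i (1 : ℝ))) • g x ∂volume
      = - ∫ x, φ x • Gi x ∂volume

/-- `G` is the weak gradient of `g`. -/
def HasWeakGrad {d : ℕ} {F : Type} [NormedAddCommGroup F] [NormedSpace ℝ F]
    (g : Rd d → F) (G : Rd d → Fin d → F) : Prop :=
  ∀ i : Fin d, HasWeakPartial g (fun x => G x i) i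

/-- `⟨M y, z⟩`, the quadratic pairing of a real matrix. -/
def matQR {d : ℕ} (M : Matrix (Fin d) (Fin d) ℝ) (y z : Fin d → ℝ) : ℝ :=
  ∑ i, ∑ k, M i k * y k * z i

/-- `⟨V(x) f(x), f(x)⟩`, the potential quadratic form. -/
def VquadR {d m : ℕ} (V : Rd d → Matrix (Fin m) (Fin m) ℝ)
    (f : Rd d → Em m) (x : Rd d) : ℝ :=
  ∑ i, ∑ j, V x i j * f x j * f x i

/-- Membership in `H¹(ℝ^d, ℝ)` with weak gradient `G`. -/
def MemH1R {d : ℕ} (g : Rd d → ℝ) (G : Rd d → Fin d → ℝ) : Prop :=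
  MemLp g 2 volume ∧ MemLp G 2 volume ∧ HasWeakGrad g G

/-- Membership in the form domain `D(a)` (real-valued functions), with the weak
gradients `Df` of the components recorded: `f ∈ H¹(ℝ^d, ℝ^m)` and `∫ ⟨Vf, f⟩ < ∞`. -/
def MemDaGradR {d m : ℕ} (V : Rd d → Matrix (Fin m) (Fin m) ℝ)
    (f : Rd d → Em m) (Df : Fin m → Rd d → Fin d → ℝ) : Prop :=
  MemLp f 2 volume ∧ (∀ j, MemH1R (fun x => f x j) (Df j)) ∧
  Integrable (fun x => VquadR V f x) volume

/-- The bilinear form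
`a(f,g) = ∫ ∑_j ⟨Q ∇f_j, ∇g_j⟩ + ∫ ⟨V f, g⟩`. -/
def aValR {d m : ℕ} (Q : Rd d → Matrix (Fin d) (Fin d) ℝ)
    (V : Rd d → Matrix (Fin m) (Fin m) ℝ)
    (f g : Rd d → Em m) (Df Dg : Fin m → Rd d → Fin d → ℝ) : ℝ :=
  (∫ x, ∑ j, matQR (Q x) (Df j x) (Dg j x) ∂volume)
    + ∫ x, ∑ i, ∑ k, V x i k * f x k * g x i ∂volume


lemma matQR_comb {d : ℕ} (M : Matrix (Fin d) (Fin d) ℝ) (a b : ℝ) (y z : Fin d → ℝ) :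
    matQR M (fun i => a * y i + b * z i) (fun i => a * y i + b * z i)
      = a^2 * matQR M y y + a*b*(matQR M y z + matQR M z y) + b^2 * matQR M z z := by
  simp only [matQR, Finset.mul_sum, mul_add, ← Finset.sum_add_distrib]
  refine Finset.sum_congr rfl fun i _ => Finset.sum_congr rfl fun k _ => ?_
  ring

lemma matQR_symm {d : ℕ} {M : Matrix (Fin d) (Fin d) ℝ} (hM : M.IsSymm) (y z : Fin d → ℝ) :
    matQR M y z = matQR M z y := by
  simp only [matQR]
  rw [Finset.sum_comm]
  refine Finset.sum_congr rfl fun i _ => Finset.sum_congr rfl fun k _ => ?_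
  rw [hM.apply]; ring

lemma matQR_sum_right {d m : ℕ} (M : Matrix (Fin d) (Fin d) ℝ) (y : Fin d → ℝ)
    (coef : Fin m → ℝ) (w : Fin m → Fin d → ℝ) :
    matQR M y (fun i => ∑ j, coef j * w j i) = ∑ j, coef j * matQR M y (w j) := by
  simp only [matQR, Finset.mul_sum]
  rw [show (∑ i, ∑ k, ∑ j, M i k * y k * (coef j * w j i))
      = ∑ i, ∑ j, ∑ k, M i k * y k * (coef j * w j i) from
    Finset.sum_congr rfl fun i _ => Finset.sum_comm, Finset.sum_comm]
  refine Finset.sum_congr rfl fun j _ => Finset.sum_congr rfl fun i _ =>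
    Finset.sum_congr rfl fun k _ => ?_
  ring

lemma key_identity {d m : ℕ} (M : Matrix (Fin d) (Fin d) ℝ) (hM : M.IsSymm)
    (s c : ℝ) (u : Fin m → ℝ) (hu : ∑ j, u j ^ 2 = 1)
    (Dfv : Fin m → Fin d → ℝ) (Gv : Fin d → ℝ)
    (hGv : Gv = fun i => ∑ j, u j * Dfv j i) :
    ∑ j, matQR M (fun i => (s - c) * u j * Gv i + c * Dfv j i)
        (fun i => (s - c) * u j * Gv i + c * Dfv j i)
      = (s^2 - c^2) * matQR M Gv Gv + c^2 * ∑ j, matQR M (Dfv j) (Dfv j) := by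
  have hP : ∑ j, u j * matQR M Gv (Dfv j) = matQR M Gv Gv := by
    rw [← matQR_sum_right, ← hGv]
  calc ∑ j, matQR M (fun i => (s - c) * u j * Gv i + c * Dfv j i)
        (fun i => (s - c) * u j * Gv i + c * Dfv j i)
      = ∑ j, (((s-c)^2 * matQR M Gv Gv) * u j ^ 2
          + (2*(s-c)*c) * (u j * matQR M Gv (Dfv j)) + c^2 * matQR M (Dfv j) (Dfv j)) := by
        refine Finset.sum_congr rfl fun j _ => ?_
        rw [matQR_comb M ((s-c) * u j) c Gv (Dfv j),
          matQR_symm hM (Dfv j) Gv]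
        ring
    _ = ((s-c)^2 * matQR M Gv Gv) * (∑ j, u j ^ 2)
          + (2*(s-c)*c) * (∑ j, u j * matQR M Gv (Dfv j))
          + c^2 * ∑ j, matQR M (Dfv j) (Dfv j) := by
        rw [Finset.sum_add_distrib, Finset.sum_add_distrib, ← Finset.mul_sum,
          ← Finset.mul_sum, ← Finset.mul_sum]
    _ = (s^2 - c^2) * matQR M Gv Gv + c^2 * ∑ j, matQR M (Dfv j) (Dfv j) := by
        rw [hu, hP]; ring

/-- Pointwise identity and inequality in the truncation lemma:
a.e., `∑_j ⟨Q ∇(Pf)_j, ∇(Pf)_j⟩` equals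
`((1+sign(1-|f|))²/4 - (1∧|f|)²/|f|²) χ_{f≠0} |∇|f||²_Q
  + ((1∧|f|)²/|f|²) χ_{f≠0} ∑_j ⟨Q ∇f_j, ∇f_j⟩`,
and is at most `∑_j ⟨Q ∇f_j, ∇f_j⟩`. -/
theorem truncation_pointwise_identity
    (d m : ℕ) (hd : 0 < d) (hm : 0 < m)
    (Q : Rd d → Matrix (Fin d) (Fin d) ℝ) (η₁ η₂ : ℝ)
    (hη₁ : 0 < η₁) (hη₂ : 0 < η₂)
    (hQsym : ∀ x, (Q x).IsSymm)
    (hQl : ∀ (x : Rd d) (ξ : Fin d → ℝ),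
      η₁ * ∑ i, ξ i ^ 2 ≤ ∑ i, ∑ k, Q x i k * ξ k * ξ i)
    (hQu : ∀ (x : Rd d) (ξ : Fin d → ℝ),
      ∑ i, ∑ k, Q x i k * ξ k * ξ i ≤ η₂ * ∑ i, ξ i ^ 2)
    (V : Rd d → Matrix (Fin m) (Fin m) ℝ)
    (hVsym : ∀ x, (V x).IsSymm)
    (hVloc : ∀ i j, LocallyIntegrable (fun x => V x i j) volume)
    (hVpos : ∀ (x : Rd d) (ξ : Fin m → ℝ), 0 ≤ ∑ i, ∑ j, V x i j * ξ j * ξ i)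
    (f : Rd d → Em m) (Df : Fin m → Rd d → Fin d → ℝ)
    (hf : MemDaGradR V f Df)
    (G : Rd d → Fin d → ℝ)
    (hG : G = fun x i => if f x = 0 then 0 else (∑ j, f x j * Df j x i) / ‖f x‖)
    (DPf : Fin m → Rd d → Fin d → ℝ)
    (hDPf : DPf = fun j x i => if f x = 0 then 0 else
      (1 + Real.sign (1 - ‖f x‖)) / 2 * (f x j / ‖f x‖) * G x i
        + min 1 ‖f x‖ / ‖f x‖ * (Df j x i - f x j / ‖f x‖ * G x i)) :
    ∀ᵐ x ∂(volume : Measure (Rd d)),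
      (∑ j, matQR (Q x) (DPf j x) (DPf j x))
        = ((1 + Real.sign (1 - ‖f x‖)) ^ 2 / 4 - (min 1 ‖f x‖) ^ 2 / ‖f x‖ ^ 2)
            * (if f x = 0 then 0 else 1) * matQR (Q x) (G x) (G x)
          + (min 1 ‖f x‖) ^ 2 / ‖f x‖ ^ 2 * (if f x = 0 then 0 else 1)
            * ∑ j, matQR (Q x) (Df j x) (Df j x) ∧
      (∑ j, matQR (Q x) (DPf j x) (DPf j x)) ≤ ∑ j, matQR (Q x) (Df j x) (Df j x) := by
  refine Filter.Eventually.of_forall fun x => ?_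
  have hQnn : ∀ z : Fin d → ℝ, 0 ≤ matQR (Q x) z z := fun z =>
    le_trans (by positivity) (hQl x z)
  have hT0 : 0 ≤ ∑ j, matQR (Q x) (Df j x) (Df j x) :=
    Finset.sum_nonneg fun j _ => hQnn _
  by_cases h : f x = 0
  · have hz : ∀ j, DPf j x = fun _ => (0 : ℝ) := by
      intro j; funext i; rw [hDPf]; simp [h]
    have hL : ∑ j, matQR (Q x) (DPf j x) (DPf j x) = 0 := by
      refine Finset.sum_eq_zero fun j _ => ?_
      rw [hz j]; simp [matQR]
    constructor
    · rw [hL]; simp [h]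
    · rw [hL]; exact hT0
  · have hn0 : (0 : ℝ) < ‖f x‖ := norm_pos_iff.mpr h
    have hnne : ‖f x‖ ≠ 0 := ne_of_gt hn0
    set n : ℝ := ‖f x‖ with hn'
    set s : ℝ := (1 + Real.sign (1 - n)) / 2 with hs'
    set c : ℝ := min 1 n / n with hc'
    have hS : ∑ j, (f x j) ^ 2 = n ^ 2 := by
      have h1 : n = Real.sqrt (∑ j, (f x j) ^ 2) := by
        rw [hn', EuclideanSpace.norm_eq]
        congr 1
        exact Finset.sum_congr rfl fun j _ => by rw [Real.norm_eq_abs, sq_abs]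
      rw [h1, Real.sq_sqrt (Finset.sum_nonneg fun j _ => sq_nonneg _)]
    have hu : ∑ j, (f x j / n) ^ 2 = 1 := by
      simp only [div_pow]
      rw [← Finset.sum_div, hS, div_self (by positivity)]
    have hGx : G x = fun i => ∑ j, (f x j / n) * Df j x i := by
      funext i
      rw [hG]
      simp only [if_neg h, Finset.sum_div, ← hn']
      exact Finset.sum_congr rfl fun j _ => by ring
    have hDPfx : ∀ j, DPf j x =
        fun i => (s - c) * (f x j / n) * G x i + c * Df j x i := by
      intro j; funext i
      rw [hDPf]
      simp only [if_neg h, ← hn', hs', hc']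
      ring
    have hsumB : ∑ j, matQR (Q x) (DPf j x) (DPf j x)
        = (s^2 - c^2) * matQR (Q x) (G x) (G x)
          + c^2 * ∑ j, matQR (Q x) (Df j x) (Df j x) := by
      rw [show (∑ j, matQR (Q x) (DPf j x) (DPf j x))
          = ∑ j, matQR (Q x)
              (fun i => (s - c) * (f x j / n) * G x i + c * Df j x i)
              (fun i => (s - c) * (f x j / n) * G x i + c * Df j x i) from
        Finset.sum_congr rfl fun j _ => by rw [hDPfx j]]
      exact key_identity (Q x) (hQsym x) s c (fun j => f x j / n) hu
        (fun j => Df j x) (G x) hGx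
    have hs2 : s ^ 2 = (1 + Real.sign (1 - n)) ^ 2 / 4 := by rw [hs']; ring
    have hc2 : c ^ 2 = (min 1 n) ^ 2 / n ^ 2 := by rw [hc', div_pow]
    have hc01 : 0 ≤ c ∧ c ≤ 1 := by
      constructor
      · exact div_nonneg (le_min zero_le_one hn0.le) hn0.le
      · rw [hc']; exact (div_le_one hn0).mpr (min_le_right 1 n)
    have hsc : s ^ 2 ≤ c ^ 2 := by
      rcases lt_trichotomy n 1 with h1 | h1 | h1
      · have : Real.sign (1 - n) = 1 := Real.sign_of_pos (by linarith)
        rw [hs', hc', this, min_eq_right h1.le, div_self hnne]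
        norm_num
      · have : Real.sign (1 - n) = 0 := by rw [h1]; simp
        rw [hs', hc', this, h1]
        norm_num
      · have : Real.sign (1 - n) = -1 := Real.sign_of_neg (by linarith)
        rw [hs', this]
        norm_num
        positivity
    constructor
    · rw [hsumB, if_neg h, ← hs2, ← hc2]
      ring
    · rw [hsumB]
      have h1 : (s^2 - c^2) * matQR (Q x) (G x) (G x) ≤ 0 :=
        mul_nonpos_of_nonpos_of_nonneg (by linarith) (hQnn _)
      have h2 : c^2 * ∑ j, matQR (Q x) (Df j x) (Df j x)
          ≤ ∑ j, matQR (Q x) (Df j x) (Df j x) := by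
        have hcsq : c ^ 2 ≤ 1 := by nlinarith [hc01.1, hc01.2]
        calc c^2 * ∑ j, matQR (Q x) (Df j x) (Df j x)
            ≤ 1 * ∑ j, matQR (Q x) (Df j x) (Df j x) :=
              mul_le_mul_of_nonneg_right hcsq hT0
          _ = _ := one_mul _
      linarith
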